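/- arXiv:1211.0803 — 2 statements merged into one kernel-verified Lean document; each statement's English description precedes it below -/
import Mathlib

section
/- Every A-type quantum walk with an arbitrary shift family can be expressed through an A-type quantum walk with flip-flop shift: for every shift family σ and every coin H = (H_j)_{j∈V}, letting P^{(j)} be the permutation matrix on ℂ^{N(j)} representing σ_j and H̃_j = H_j P^{(j)}, one has U^A_σ[H_j : j∈V] = S_σ · (U^A_{ff}[H̃_j† : j∈V])† · S_σ†. -/
open Matrix Complex BigOperators

section QWFramework

variable {V : Type*}

instance arcDecPred (G : SimpleGraph V) [DecidableRel G.Adj] :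
    DecidablePred fun p : V × V => G.Adj p.1 p.2 :=
  fun p => inferInstanceAs (Decidable (G.Adj p.1 p.2))

instance nbrDecPred (G : SimpleGraph V) [DecidableRel G.Adj] (u : V) :
    DecidablePred (G.Adj u) :=
  fun w => inferInstanceAs (Decidable (G.Adj u w))

/-- The symmetric arc set `D(G)` of a graph: ordered pairs of adjacent vertices. -/
abbrev Arc (G : SimpleGraph V) : Type _ := {p : V × V // G.Adj p.1 p.2}

variable [Fintype V] [DecidableEq V]

/-- The shift (permutation) operator `S_σ` of a shift family `σ`, acting on `ℂ^{D(G)}`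
by `S_σ |i,j⟩ = |j, σ_j(i)⟩`. -/
noncomputable def shiftOp (G : SimpleGraph V) [DecidableRel G.Adj]
    (σ : ∀ u : V, Equiv.Perm {w : V // G.Adj u w}) :
    Matrix (Arc G) (Arc G) ℂ :=
  fun a b => if a.1.1 = b.1.2 ∧ a.1.2 = (σ b.1.2 ⟨b.1.1, b.2.symm⟩).1 then 1 else 0

/-- The flip-flop shift family: the identity permutation at every vertex. -/
def ffFam (G : SimpleGraph V) : ∀ u : V, Equiv.Perm {w : V // G.Adj u w} :=
  fun _ => Equiv.refl _

/-- The flip-flop shift operator `S`, with `S|i,j⟩ = |j,i⟩`. -/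
noncomputable def ffShift (G : SimpleGraph V) [DecidableRel G.Adj] : Matrix (Arc G) (Arc G) ℂ :=
  shiftOp G (ffFam G)

/-- The block-diagonal coin operator `C = ⊕_u H_u`, acting by
`C|i,j⟩ = Σ_{k∈N(i)} (H_i)_{k,j} |i,k⟩`. -/
noncomputable def coinOp (G : SimpleGraph V) [DecidableRel G.Adj]
    (H : ∀ u : V, Matrix {w : V // G.Adj u w} {w : V // G.Adj u w} ℂ) :
    Matrix (Arc G) (Arc G) ℂ :=
  fun a b => if h : a.1.1 = b.1.1 then H b.1.1 ⟨a.1.2, by rw [← h]; exact a.2⟩ ⟨b.1.2, b.2⟩ else 0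

/-- The G-type (Gudder type) coined quantum walk `U^G_σ[H] = C·S_σ`. -/
noncomputable def gWalk (G : SimpleGraph V) [DecidableRel G.Adj]
    (σ : ∀ u : V, Equiv.Perm {w : V // G.Adj u w})
    (H : ∀ u : V, Matrix {w : V // G.Adj u w} {w : V // G.Adj u w} ℂ) :
    Matrix (Arc G) (Arc G) ℂ :=
  coinOp G H * shiftOp G σ

/-- The A-type (Ambainis type) coined quantum walk `U^A_σ[H] = S_σ·C`. -/
noncomputable def aWalk (G : SimpleGraph V) [DecidableRel G.Adj]
    (σ : ∀ u : V, Equiv.Perm {w : V // G.Adj u w})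
    (H : ∀ u : V, Matrix {w : V // G.Adj u w} {w : V // G.Adj u w} ℂ) :
    Matrix (Arc G) (Arc G) ℂ :=
  shiftOp G σ * coinOp G H

end QWFramework

/-- The permutation matrix of a permutation `π`, sending the basis vector `e_b` to `e_{π b}`. -/
noncomputable def permMat {α : Type*} [Fintype α] [DecidableEq α] (π : Equiv.Perm α) :
    Matrix α α ℂ :=
  fun a b => if a = π b then 1 else 0

/-
The flip-flop shift `S` is an involution, and `H ↦ ⊕_u H_u` is multiplicative and commutes with
`†` (it is a block diagonal matrix once `D(G)` is identified with `Σ u, N(u)`). Hence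
`(U^A_ff[H̃†])† = C[H̃]·S = C[H]·C[P]·S`, and `C[P]·S = S_σ` because `S_σ` factors as the flip
`(i,j) ↦ (j,i)` followed by `(j,i) ↦ (j, σ_j(i))`. The right-hand side is therefore
`S_σ·C[H]·S_σ·S_σ† = S_σ·C[H]`.
-/

section PermMat

variable {α : Type*} [Fintype α] [DecidableEq α]

lemma permMat_eq_permMatrix_inv (π : Equiv.Perm α) : permMat π = π⁻¹.permMatrix ℂ := by
  ext a b
  simp [permMat, Equiv.eq_symm_apply, eq_comm]

lemma permMat_conjTranspose (π : Equiv.Perm α) : (permMat π)ᴴ = permMat π⁻¹ := by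
  rw [permMat_eq_permMatrix_inv, permMat_eq_permMatrix_inv, conjTranspose_permMatrix]

lemma permMat_mul_conjTranspose_self (π : Equiv.Perm α) : permMat π * (permMat π)ᴴ = 1 := by
  rw [permMat_conjTranspose, permMat_eq_permMatrix_inv, permMat_eq_permMatrix_inv,
    ← permMatrix_mul, inv_mul_cancel, permMatrix_one]

lemma mul_permMat (M : Matrix α α ℂ) (π : Equiv.Perm α) : M * permMat π = M.submatrix id π := by
  rw [permMat_eq_permMatrix_inv, PEquiv.mul_toMatrix_toPEquiv]
  rfl

end PermMat

section QuantumWalk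

variable {V : Type*} (G : SimpleGraph V)

def arcPerm (σ : ∀ u : V, Equiv.Perm {w : V // G.Adj u w}) : Equiv.Perm (Arc G) where
  toFun b := ⟨(b.1.2, σ b.1.2 ⟨b.1.1, b.2.symm⟩), (σ b.1.2 ⟨b.1.1, b.2.symm⟩).2⟩
  invFun a := ⟨((σ a.1.1).symm ⟨a.1.2, a.2⟩, a.1.1), ((σ a.1.1).symm ⟨a.1.2, a.2⟩).2.symm⟩
  left_inv := by rintro ⟨⟨i, j⟩, h⟩; simp
  right_inv := by rintro ⟨⟨i, j⟩, h⟩; simp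

lemma arcPerm_ffFam_inv : (arcPerm G (ffFam G))⁻¹ = arcPerm G (ffFam G) := by
  ext ⟨⟨i, j⟩, h⟩ <;> simp [arcPerm, ffFam, Equiv.Perm.inv_def]

variable [DecidableEq V] [DecidableRel G.Adj]

lemma coinOp_eq_submatrix_blockDiagonal'
    (K : ∀ u : V, Matrix {w : V // G.Adj u w} {w : V // G.Adj u w} ℂ) :
    coinOp G K = (blockDiagonal' K).submatrix (Equiv.subtypeProdEquivSigmaSubtype G.Adj)
      (Equiv.subtypeProdEquivSigmaSubtype G.Adj) := by
  ext ⟨⟨i, j⟩, hij⟩ ⟨⟨k, l⟩, hkl⟩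
  by_cases h : i = k
  · subst h; simp [coinOp, Equiv.subtypeProdEquivSigmaSubtype]
  · simp [coinOp, Equiv.subtypeProdEquivSigmaSubtype, blockDiagonal'_apply_ne _ _ _ h, h]

lemma coinOp_conjTranspose (K : ∀ u : V, Matrix {w : V // G.Adj u w} {w : V // G.Adj u w} ℂ) :
    (coinOp G K)ᴴ = coinOp G (fun u => (K u)ᴴ) := by
  simp only [coinOp_eq_submatrix_blockDiagonal', conjTranspose_submatrix,
    blockDiagonal'_conjTranspose]

variable [Fintype V]

lemma coinOp_mul (K L : ∀ u : V, Matrix {w : V // G.Adj u w} {w : V // G.Adj u w} ℂ) :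
    coinOp G (fun u => K u * L u) = coinOp G K * coinOp G L := by
  simp only [coinOp_eq_submatrix_blockDiagonal', submatrix_mul_equiv, blockDiagonal'_mul]

lemma shiftOp_eq_permMat (σ : ∀ u : V, Equiv.Perm {w : V // G.Adj u w}) :
    shiftOp G σ = permMat (arcPerm G σ) := by
  ext ⟨⟨i, j⟩, hij⟩ ⟨⟨k, l⟩, hkl⟩
  simp [shiftOp, permMat, arcPerm, Subtype.ext_iff]

lemma shiftOp_mul_conjTranspose_self (σ : ∀ u : V, Equiv.Perm {w : V // G.Adj u w}) :
    shiftOp G σ * (shiftOp G σ)ᴴ = 1 := by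
  rw [shiftOp_eq_permMat, permMat_mul_conjTranspose_self]

lemma shiftOp_ffFam_conjTranspose : (shiftOp G (ffFam G))ᴴ = shiftOp G (ffFam G) := by
  rw [shiftOp_eq_permMat, permMat_conjTranspose, arcPerm_ffFam_inv]

lemma shiftOp_eq_coinOp_permMat_mul_shiftOp_ffFam
    (σ : ∀ u : V, Equiv.Perm {w : V // G.Adj u w}) :
    shiftOp G σ = coinOp G (fun u => permMat (σ u)) * shiftOp G (ffFam G) := by
  rw [shiftOp_eq_permMat G (ffFam G), mul_permMat]
  ext ⟨⟨i, j⟩, hij⟩ ⟨⟨k, l⟩, hkl⟩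
  by_cases h : i = l
  · subst h; simp [shiftOp, coinOp, permMat, arcPerm, ffFam, Subtype.ext_iff]
  · simp [shiftOp, coinOp, arcPerm, h]

end QuantumWalk

theorem aWalk_eq_conj_aWalk_ff_general {V : Type*} [Fintype V] [DecidableEq V]
    (G : SimpleGraph V) [DecidableRel G.Adj]
    (σ : ∀ u : V, Equiv.Perm {w : V // G.Adj u w})
    (H : ∀ u : V, Matrix {w : V // G.Adj u w} {w : V // G.Adj u w} ℂ) :
    aWalk G σ H =
      shiftOp G σ * (aWalk G (ffFam G) (fun j => (H j * permMat (σ j))ᴴ))ᴴ * (shiftOp G σ)ᴴ := by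
  have hflip :
      (aWalk G (ffFam G) (fun j => (H j * permMat (σ j))ᴴ))ᴴ = coinOp G H * shiftOp G σ := by
    rw [aWalk, conjTranspose_mul, coinOp_conjTranspose, shiftOp_ffFam_conjTranspose]
    simp only [conjTranspose_conjTranspose]
    rw [coinOp_mul, mul_assoc, ← shiftOp_eq_coinOp_permMat_mul_shiftOp_ffFam]
  rw [hflip, mul_assoc, mul_assoc, shiftOp_mul_conjTranspose_self, mul_one, aWalk]

/-- Every A-type QW with an arbitrary shift family is expressed through the
A-type QW with flip-flop shift: with `P^{(j)}` the permutation matrix of `σ_j` and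
`H̃_j = H_j·P^{(j)}`, `U^A_σ[H] = S_σ·(U^A_ff[H̃†])†·S_σ†`. -/
theorem aWalk_eq_conj_aWalk_ff {V : Type*} [Fintype V] [DecidableEq V]
    (G : SimpleGraph V) [DecidableRel G.Adj] (hG : G.Connected)
    (σ : ∀ u : V, Equiv.Perm {w : V // G.Adj u w})
    (H : ∀ u : V, Matrix {w : V // G.Adj u w} {w : V // G.Adj u w} ℂ)
    (hH : ∀ u : V, H u ∈ Matrix.unitaryGroup {w : V // G.Adj u w} ℂ) :
    aWalk G σ H =
      shiftOp G σ * (aWalk G (ffFam G) (fun j => (H j * permMat (σ j))ᴴ))ᴴ * (shiftOp G σ)ᴴ :=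
  aWalk_eq_conj_aWalk_ff_general G σ H
end

section
/- (Spectral localization for the Szegedy walk) Every eigenvalue μ of the Szegedy walk U^{(P)} with μ ∉ {1,−1} satisfies: (μ + μ^{−1})/2 is an eigenvalue of the matrix J. In other words, apart from ±1, the spectrum of U^{(P)} is contained in the image of the spectrum of J under ν = cos θ ↦ e^{±iθ}. -/
open Matrix Complex BigOperators

/-- The Szegedy local coin at vertex `j`: `(H_j)_{m,l} = 2√(p_{j,l}p_{j,m}) − δ_{l,m}`. -/
noncomputable def szCoin {V : Type*} [Fintype V] [DecidableEq V]
    (G : SimpleGraph V) [DecidableRel G.Adj] (p : V → V → ℝ) (j : V) :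
    Matrix {w : V // G.Adj j w} {w : V // G.Adj j w} ℂ :=
  fun m l => ((2 * Real.sqrt (p j l.1 * p j m.1) : ℝ) : ℂ) - if l = m then 1 else 0

/-- The Szegedy walk `U^{(P)} = S·C`: the A-type walk with flip-flop shift and Szegedy coins. -/
noncomputable def szWalk {V : Type*} [Fintype V] [DecidableEq V]
    (G : SimpleGraph V) [DecidableRel G.Adj] (p : V → V → ℝ) :
    Matrix (Arc G) (Arc G) ℂ :=
  ffShift G * coinOp G (szCoin G p)

/-- The map `A : ℂ^V → ℂ^{D(G)}`, `A|j⟩ = Σ_{l∈N(j)} √(p_{j,l}) |j,l⟩`, as a matrix. -/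
noncomputable def szA {V : Type*} [Fintype V] [DecidableEq V]
    (G : SimpleGraph V) [DecidableRel G.Adj] (p : V → V → ℝ) :
    Matrix (Arc G) V ℂ :=
  fun a i => if a.1.1 = i then ((Real.sqrt (p a.1.1 a.1.2) : ℝ) : ℂ) else 0

/-- The `|V|×|V|` matrix `J` with `(J)_{u,v} = √(p_{u,v} p_{v,u})` on arcs and `0` otherwise. -/
noncomputable def szJ {V : Type*} [Fintype V] [DecidableEq V]
    (G : SimpleGraph V) [DecidableRel G.Adj] (p : V → V → ℝ) :
    Matrix V V ℂ :=
  fun u v => if G.Adj u v then ((Real.sqrt (p u v * p v u) : ℝ) : ℂ) else 0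

/-!
Write `A` for `szA G p` and `J = Aᵀ S A`. With nonnegative `p` the coin is `2 A Aᵀ - 1`, so
`U = S (2 A Aᵀ - 1)`, where `S² = 1` and, since the rows of `P` sum to one, `Aᵀ A = 1`.
For `U ψ = μ ψ`, put `f = Aᵀ ψ`. If `f = 0` then `S ψ = -μ ψ` and `ψ = S² ψ = μ² ψ`, so
`μ = ±1`. Otherwise, applying `Aᵀ S` to the eigenvalue equation gives `f = μ Aᵀ S ψ` (hence
`μ ≠ 0`), and applying `Aᵀ` gives `μ f = 2 J f - Aᵀ S ψ = 2 J f - μ⁻¹ f`.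
-/

section ReflectionWalk

variable {K m n : Type*} [Field K] [Fintype m] [DecidableEq m] [Fintype n]

def reflectionWalk (S : Matrix m m K) (A : Matrix m n K) (B : Matrix n m K) : Matrix m m K :=
  S * ((2 : K) • (A * B) - 1)

variable {S : Matrix m m K} {A : Matrix m n K} {B : Matrix n m K}

lemma reflectionWalk_mulVec (ψ : m → K) :
    reflectionWalk S A B *ᵥ ψ = (2 : K) • (S *ᵥ A *ᵥ B *ᵥ ψ) - S *ᵥ ψ := by
  rw [reflectionWalk, Matrix.mul_sub, Matrix.mul_smul, Matrix.mul_one, sub_mulVec, smul_mulVec,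
    ← mulVec_mulVec, ← mulVec_mulVec]

lemma mul_reflectionWalk :
    B * reflectionWalk S A B = (2 : K) • (B * S * A * B) - B * S := by
  simp only [reflectionWalk, Matrix.mul_sub, Matrix.mul_smul, Matrix.mul_one, Matrix.mul_assoc]

lemma mul_mul_reflectionWalk [DecidableEq n] (hS : S * S = 1) (hBA : B * A = 1) :
    B * S * reflectionWalk S A B = B := by
  rw [reflectionWalk, Matrix.mul_assoc, ← Matrix.mul_assoc S, hS, Matrix.one_mul, Matrix.mul_sub,
    Matrix.mul_smul, ← Matrix.mul_assoc, hBA, Matrix.one_mul, Matrix.mul_one, two_smul,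
    add_sub_cancel_right]

lemma mulVec_ne_zero_of_reflectionWalk_mulVec (hS : S * S = 1) {μ : K} {ψ : m → K}
    (hψ : ψ ≠ 0) (hUψ : reflectionWalk S A B *ᵥ ψ = μ • ψ) (hμ : μ * μ ≠ 1) :
    B *ᵥ ψ ≠ 0 := by
  intro hf
  rw [reflectionWalk_mulVec, hf, mulVec_zero, mulVec_zero, smul_zero, zero_sub, neg_eq_iff_eq_neg]
    at hUψ
  have hμψ : ψ = (μ * μ) • ψ := calc
    ψ = S *ᵥ S *ᵥ ψ := by rw [mulVec_mulVec, hS, one_mulVec]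
    _ = (μ * μ) • ψ := by rw [hUψ, mulVec_neg, mulVec_smul, hUψ, smul_neg, neg_neg, smul_smul]
  have : (μ * μ - 1) • ψ = 0 := by rw [sub_smul, one_smul, ← hμψ, sub_self]
  exact hψ ((smul_eq_zero.mp this).resolve_left (sub_ne_zero.mpr hμ))

theorem hasEigenvalue_of_hasEigenvalue_reflectionWalk [DecidableEq n] [NeZero (2 : K)]
    (hS : S * S = 1) (hBA : B * A = 1) {μ : K}
    (hμ : Module.End.HasEigenvalue (toLin' (reflectionWalk S A B)) μ) (hμ2 : μ * μ ≠ 1) :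
    Module.End.HasEigenvalue (toLin' (B * S * A)) ((μ + μ⁻¹) / 2) := by
  obtain ⟨ψ, hψ⟩ := hμ.exists_hasEigenvector
  have hUψ : reflectionWalk S A B *ᵥ ψ = μ • ψ := by simpa using hψ.apply_eq_smul
  have hf := mulVec_ne_zero_of_reflectionWalk_mulVec hS hψ.2 hUψ hμ2
  have hBSψ : B *ᵥ ψ = μ • ((B * S) *ᵥ ψ) := by
    rw [← mulVec_smul, ← hUψ, mulVec_mulVec, mul_mul_reflectionWalk hS hBA]
  have hμ0 : μ ≠ 0 := by
    rintro rfl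
    exact hf (by rwa [zero_smul] at hBSψ)
  have hBUψ : μ • (B *ᵥ ψ) = (2 : K) • ((B * S * A) *ᵥ B *ᵥ ψ) - (B * S) *ᵥ ψ := by
    rw [← mulVec_smul, ← hUψ, mulVec_mulVec, mul_reflectionWalk, sub_mulVec, smul_mulVec,
      mulVec_mulVec]
  rw [(eq_inv_smul_iff₀ hμ0).mpr hBSψ.symm, eq_sub_iff_add_eq] at hBUψ
  refine Module.End.hasEigenvalue_of_hasEigenvector ⟨?_, hf⟩
  rw [Module.End.mem_eigenspace_iff, toLin'_apply]
  apply smul_right_injective _ (two_ne_zero : (2 : K) ≠ 0)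
  dsimp only
  rw [smul_smul, mul_div_cancel₀ _ two_ne_zero, add_smul, hBUψ]

end ReflectionWalk

section Szegedy

variable {V : Type*} (G : SimpleGraph V)

def Arc.rev (a : Arc G) : Arc G := ⟨(a.1.2, a.1.1), a.2.symm⟩

@[simp]
lemma Arc.rev_rev (a : Arc G) : Arc.rev G (Arc.rev G a) = a := rfl

variable [DecidableEq V] [DecidableRel G.Adj]

lemma ffShift_apply (a b : Arc G) : ffShift G a b = if b = Arc.rev G a then 1 else 0 := by
  obtain ⟨⟨u, v⟩, huv⟩ := a
  obtain ⟨⟨u', v'⟩, huv'⟩ := b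
  simp only [ffShift, shiftOp, ffFam, Equiv.refl_apply, Arc.rev, Subtype.mk.injEq, Prod.mk.injEq]
  exact if_congr (by tauto) rfl rfl

variable [Fintype V]

lemma ffShift_mul_apply {ι : Type*} (M : Matrix (Arc G) ι ℂ) (a : Arc G) (i : ι) :
    (ffShift G * M) a i = M (Arc.rev G a) i := by
  simp [mul_apply, ffShift_apply]

lemma ffShift_mul_self : ffShift G * ffShift G = 1 := by
  ext a b
  rw [ffShift_mul_apply, ffShift_apply, Arc.rev_rev, one_apply]
  exact if_congr eq_comm rfl rfl

lemma sum_arc_ite_fst_eq (u : V) (g : V → ℂ) :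
    ∑ a : Arc G, (if a.1.1 = u then g a.1.2 else 0) = ∑ w ∈ G.neighborFinset u, g w := by
  rw [← Finset.sum_subtype (Finset.univ.filter fun x : V × V => G.Adj x.1 x.2) (by simp)
    (fun x : V × V => if x.1 = u then g x.2 else 0), Finset.sum_filter, Fintype.sum_prod_type,
    Fintype.sum_eq_single u (fun x hx => by simp [hx])]
  simp [SimpleGraph.neighborFinset_eq_filter, Finset.sum_filter]

variable (p : V → V → ℝ)

lemma szA_mul_transpose_apply (a b : Arc G) :
    (szA G p * (szA G p)ᵀ) a b =
      if a.1.1 = b.1.1 then ((√(p a.1.1 a.1.2) * √(p b.1.1 b.1.2) : ℝ) : ℂ) else 0 := by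
  simp [mul_apply, szA]

lemma coinOp_szCoin (hp0 : ∀ u v, 0 ≤ p u v) :
    coinOp G (szCoin G p) = (2 : ℂ) • (szA G p * (szA G p)ᵀ) - 1 := by
  ext ⟨⟨u, v⟩, huv⟩ ⟨⟨u', w⟩, huw⟩
  rw [Matrix.sub_apply, Matrix.smul_apply, szA_mul_transpose_apply, one_apply]
  by_cases h : u = u'
  · subst h
    simp only [coinOp, szCoin, dite_true, if_true, Subtype.mk.injEq, Prod.mk.injEq, true_and,
      Real.sqrt_mul (hp0 _ _), eq_comm (a := w), smul_eq_mul]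
    push_cast
    ring
  · simp [coinOp, h]

lemma transpose_szA_mul_szA (hp0 : ∀ u v, 0 ≤ p u v)
    (hpsum : ∀ u, ∑ w ∈ G.neighborFinset u, p u w = 1) :
    (szA G p)ᵀ * szA G p = 1 := by
  ext u v
  have hterm (a : Arc G) : szA G p a u * szA G p a v =
      if u = v then (if a.1.1 = u then ((p u a.1.2 : ℝ) : ℂ) else 0) else 0 := by
    obtain ⟨⟨x, w⟩, hxw⟩ := a
    by_cases hx : x = u
    · subst hx
      by_cases huv : x = v
      · simp [szA, huv, ← ofReal_mul, Real.mul_self_sqrt (hp0 _ _)]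
      · simp [szA, huv]
    · simp [szA, hx]
  simp only [mul_apply, transpose_apply, hterm, one_apply]
  split_ifs
  · rw [sum_arc_ite_fst_eq G u (fun w => ((p u w : ℝ) : ℂ)), ← ofReal_sum, hpsum, ofReal_one]
  · simp

lemma transpose_szA_mul_ffShift_mul_szA (hp0 : ∀ u v, 0 ≤ p u v) :
    (szA G p)ᵀ * ffShift G * szA G p = szJ G p := by
  rw [Matrix.mul_assoc]
  ext u v
  have hterm (a : Arc G) : szA G p a u * szA G p (Arc.rev G a) v =
      if a.1.1 = u then ((√(p u a.1.2) : ℝ) : ℂ) * (if a.1.2 = v then ((√(p v u) : ℝ) : ℂ) else 0)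
        else 0 := by
    obtain ⟨⟨x, w⟩, hxw⟩ := a
    by_cases hx : x = u
    · subst hx
      by_cases hwv : w = v <;> simp [szA, Arc.rev, hwv]
    · simp [szA, hx]
  rw [mul_apply]
  simp only [ffShift_mul_apply, transpose_apply, hterm]
  rw [sum_arc_ite_fst_eq G u
    (fun w => ((√(p u w) : ℝ) : ℂ) * if w = v then ((√(p v u) : ℝ) : ℂ) else 0)]
  simp only [mul_ite, mul_zero, Finset.sum_ite_eq', SimpleGraph.mem_neighborFinset, szJ,
    Real.sqrt_mul (hp0 _ _), ofReal_mul]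

lemma szWalk_eq_reflectionWalk (hp0 : ∀ u v, 0 ≤ p u v) :
    szWalk G p = reflectionWalk (ffShift G) (szA G p) (szA G p)ᵀ := by
  rw [szWalk, coinOp_szCoin G p hp0, reflectionWalk]

end Szegedy

theorem szWalk_eigenvalue_of_J_general {V : Type*} [Fintype V] [DecidableEq V]
    (G : SimpleGraph V) [DecidableRel G.Adj]
    (p : V → V → ℝ) (hp0 : ∀ u v, 0 ≤ p u v)
    (hpsum : ∀ u : V, ∑ w ∈ G.neighborFinset u, p u w = 1) :
    ∀ μ : ℂ, Module.End.HasEigenvalue (Matrix.toLin' (szWalk G p)) μ →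
      μ ≠ 1 → μ ≠ -1 →
      Module.End.HasEigenvalue (Matrix.toLin' (szJ G p)) ((μ + μ⁻¹) / 2) := by
  intro μ hμ hμ1 hμm1
  rw [szWalk_eq_reflectionWalk G p hp0] at hμ
  rw [← transpose_szA_mul_ffShift_mul_szA G p hp0]
  refine hasEigenvalue_of_hasEigenvalue_reflectionWalk (ffShift_mul_self G)
    (transpose_szA_mul_szA G p hp0 hpsum) hμ ?_
  rw [Ne, mul_self_eq_one_iff, not_or]
  exact ⟨hμ1, hμm1⟩

/-- spectral localization for the Szegedy walk: every eigenvalue `μ ∉ {1,−1}`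
of `U^{(P)}` satisfies that `(μ + μ⁻¹)/2` is an eigenvalue of `J`. -/
theorem szWalk_eigenvalue_of_J {V : Type*} [Fintype V] [DecidableEq V]
    (G : SimpleGraph V) [DecidableRel G.Adj] (hG : G.Connected)
    (p : V → V → ℝ) (hp0 : ∀ u v, 0 ≤ p u v) (hpadj : ∀ u v, ¬ G.Adj u v → p u v = 0)
    (hpsum : ∀ u : V, ∑ w ∈ G.neighborFinset u, p u w = 1) :
    ∀ μ : ℂ, Module.End.HasEigenvalue (Matrix.toLin' (szWalk G p)) μ →
      μ ≠ 1 → μ ≠ -1 →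
      Module.End.HasEigenvalue (Matrix.toLin' (szJ G p)) ((μ + μ⁻¹) / 2) :=
  szWalk_eigenvalue_of_J_general G p hp0 hpsum
end
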